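/- arXiv:2404.03318 — 4 statements merged into one kernel-verified Lean document; each statement's English description precedes it below -/
import Mathlib

section
/- Let g = sl(2,R) with basis {X, Y, Z} satisfying [X,Y] = Z, [Z,X] = -Y, [Z,Y] = X. For every t > 0, k_t = span_C{X - t·i·Y} ⊂ g_C satisfies k_t ∩ conj(k_t) = {0} and k_t ⊕ conj(k_t) is not a subalgebra of g_C; moreover [Z, X - t·i·Y] ∈ k_t if and only if t = 1. -/
/-!
Conjugation sends `X - tiY` to `X + tiY`, so `conj(k_t) = k_{-t}`, and the lines `k_t`, `k_{-t}`
are distinct for `t ≠ 0`. Both lie in the plane `Z = 0`, while `[X - tiY, X + tiY] = 2tiZ` does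
not. Finally `[Z, X - tiY] = -(tiX + Y)` is proportional to `X - tiY` exactly when `t² = 1`.
-/

open Complex

/-- The bracket of (the complexification of) `sl(2,ℝ)` with respect to the basis
`X, Y, Z` satisfying `[X,Y] = Z`, `[Z,X] = -Y`, `[Z,Y] = X`, extended bilinearly:
a vector `a : Fin 3 → ℂ` stands for `a 0 • X + a 1 • Y + a 2 • Z`. -/
noncomputable def sl2br (a b : Fin 3 → ℂ) : Fin 3 → ℂ :=
  ![a 2 * b 1 - a 1 * b 2, a 0 * b 2 - a 2 * b 0, a 0 * b 1 - a 1 * b 0]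

noncomputable def Xv : Fin 3 → ℂ := ![1, 0, 0]
noncomputable def Yv : Fin 3 → ℂ := ![0, 1, 0]
noncomputable def Zv : Fin 3 → ℂ := ![0, 0, 1]

/-- The conjugation of the complexification fixing the real form `sl(2,ℝ)`. -/
noncomputable def conjv (v : Fin 3 → ℂ) : Fin 3 → ℂ := fun i => star (v i)

/-- `k_t = span_ℂ{X - t·i·Y}`. -/
noncomputable def kt (t : ℝ) : Submodule ℂ (Fin 3 → ℂ) :=
  Submodule.span ℂ ({Xv - ((t : ℂ) * I) • Yv} : Set (Fin 3 → ℂ))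

/-- `conj(k_t)`. -/
noncomputable def ktbar (t : ℝ) : Submodule ℂ (Fin 3 → ℂ) :=
  Submodule.span ℂ (conjv '' (kt t : Set (Fin 3 → ℂ)))

lemma Xv_sub_smul_Yv (z : ℂ) : Xv - z • Yv = ![1, -z, 0] := by
  funext i
  fin_cases i <;> simp [Xv, Yv]

lemma mem_kt_iff (t : ℝ) (w : Fin 3 → ℂ) :
    w ∈ kt t ↔ w 2 = 0 ∧ w 1 = -((t : ℂ) * I) * w 0 := by
  rw [kt, Submodule.mem_span_singleton, Xv_sub_smul_Yv]
  constructor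
  · rintro ⟨c, rfl⟩
    simp [mul_comm]
  · rintro ⟨h2, h1⟩
    refine ⟨w 0, funext fun i => ?_⟩
    fin_cases i <;> simp [h1, h2, mul_comm]

lemma conjv_Xv_sub_smul_Yv (z : ℂ) : conjv (Xv - z • Yv) = Xv - star z • Yv := by
  simp only [Xv_sub_smul_Yv]
  funext i
  fin_cases i <;> simp [conjv]

lemma ktbar_eq_kt_neg (t : ℝ) : ktbar t = kt (-t) := by
  have hconj : conjv = ⇑(starLinearEquiv ℂ : (Fin 3 → ℂ) ≃ₗ⋆[ℂ] (Fin 3 → ℂ)) := rfl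
  rw [ktbar, kt, kt, hconj, ← LinearEquiv.coe_toLinearMap, ← Submodule.map_coe,
    Submodule.span_eq, Submodule.map_span, Set.image_singleton, LinearEquiv.coe_toLinearMap,
    ← hconj, conjv_Xv_sub_smul_Yv]
  simp

lemma kt_inf_kt_neg {t : ℝ} (ht : t ≠ 0) : kt t ⊓ kt (-t) = ⊥ := by
  refine (Submodule.eq_bot_iff _).2 fun w hw => ?_
  obtain ⟨⟨h2, h1⟩, -, h1'⟩ := And.imp (mem_kt_iff t w).1 (mem_kt_iff (-t) w).1 hw
  have htI : (t : ℂ) * I ≠ 0 := mul_ne_zero (ofReal_ne_zero.2 ht) I_ne_zero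
  have h0 : w 0 = 0 := by
    have : (2 * ((t : ℂ) * I)) * w 0 = 0 := by push_cast at h1'; linear_combination h1 - h1'
    simpa [htI] using this
  funext i
  fin_cases i <;> simp [h0, h1, h2]

lemma sl2br_Xv_sub_smul_Yv (z w : ℂ) : sl2br (Xv - z • Yv) (Xv - w • Yv) = (z - w) • Zv := by
  simp only [Xv_sub_smul_Yv]
  funext i
  fin_cases i <;> simp [sl2br, Zv]
  ring

lemma sl2br_Zv_Xv_sub_smul_Yv (z : ℂ) : sl2br Zv (Xv - z • Yv) = ![-z, -1, 0] := by
  simp only [Xv_sub_smul_Yv]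
  funext i
  fin_cases i <;> simp [sl2br, Zv]

lemma kt_le_ker_proj_two (t : ℝ) : kt t ≤ LinearMap.ker (LinearMap.proj 2) :=
  fun w hw => ((mem_kt_iff t w).1 hw).1

lemma not_forall_sl2br_mem_kt_sup_kt_neg {t : ℝ} (ht : t ≠ 0) :
    ¬ ∀ a ∈ kt t ⊔ kt (-t), ∀ b ∈ kt t ⊔ kt (-t), sl2br a b ∈ kt t ⊔ kt (-t) := by
  intro h
  have hbr := h _ (Submodule.mem_sup_left (Submodule.mem_span_singleton_self _))
    _ (Submodule.mem_sup_right (Submodule.mem_span_singleton_self _))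
  have hZ := sup_le (kt_le_ker_proj_two t) (kt_le_ker_proj_two (-t)) hbr
  rw [sl2br_Xv_sub_smul_Yv, LinearMap.mem_ker] at hZ
  have : (2 : ℂ) * t * I = 0 := by simpa [Zv, two_mul] using hZ
  simp [ht] at this

lemma sl2br_Zv_mem_kt_iff (t : ℝ) : sl2br Zv (Xv - ((t : ℂ) * I) • Yv) ∈ kt t ↔ t ^ 2 = 1 := by
  rw [sl2br_Zv_Xv_sub_smul_Yv, mem_kt_iff]
  have hsq : -((t : ℂ) * I) * -((t : ℂ) * I) = -((t ^ 2 : ℝ) : ℂ) := by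
    push_cast
    linear_combination (t : ℂ) ^ 2 * I_sq
  simp only [Fin.isValue, Matrix.cons_val, true_and, hsq, neg_inj, eq_comm (a := (1 : ℂ)),
    ofReal_eq_one]

/-- for every `t > 0`, `k_t = span_ℂ{X - t·i·Y}` satisfies
`k_t ∩ conj(k_t) = {0}`, `k_t ⊕ conj(k_t)` is not a subalgebra of `sl(2,ℝ)_ℂ`,
and `[Z, X - t·i·Y] ∈ k_t` if and only if `t = 1` (normality/Sasaki condition). -/
theorem stmt2 (t : ℝ) (ht : 0 < t) :
    kt t ⊓ ktbar t = ⊥ ∧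
    ¬ (∀ a ∈ kt t ⊔ ktbar t, ∀ b ∈ kt t ⊔ ktbar t, sl2br a b ∈ kt t ⊔ ktbar t) ∧
    (sl2br Zv (Xv - ((t : ℂ) * I) • Yv) ∈ kt t ↔ t = 1) := by
  rw [ktbar_eq_kt_neg, sl2br_Zv_mem_kt_iff, pow_eq_one_iff_of_nonneg ht.le two_ne_zero]
  exact ⟨kt_inf_kt_neg ht.ne', not_forall_sl2br_mem_kt_sup_kt_neg ht.ne', Iff.rfl⟩
end

section
/- Let g be a nilpotent real Lie algebra of dimension 2m+1 admitting a non-degenerate CR structure with underlying contact hyperplane D = ker φ for a contact form φ (i.e., φ ∧ (dφ)^m ≠ 0, where dφ(X,Y) = -φ([X,Y])). Then the center Z(g) of g is one-dimensional, Z(g) ∩ D = {0}, and Z(g) is spanned by the Reeb field η (the unique η with φ(η) = 1 and i_η dφ = 0). -/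
/-! For central `z`, the vector `z - φ z • η` lies in `ker φ` and is `dφ`-orthogonal to
everything, so non-degeneracy gives `z = φ z • η`: the center lies in the line `ℝ η`.
Since a nontrivial nilpotent Lie algebra has nontrivial center, it is that whole line,
which meets `ker φ` trivially because `φ η = 1`. -/

namespace LieAlgebra

variable {R K L : Type*} [LieRing L]

theorem eq_smul_of_mem_center [CommRing R] [LieAlgebra R L] {φ : L →ₗ[R] R}
    (hnd : ∀ x, φ x = 0 → (∀ y, φ y = 0 → φ ⁅x, y⁆ = 0) → x = 0)
    {η : L} (hη1 : φ η = 1) (hη2 : ∀ y : L, φ ⁅η, y⁆ = 0)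
    {z : L} (hz : z ∈ center R L) : z = φ z • η := by
  refine sub_eq_zero.mp (hnd _ (by simp [hη1]) fun y _ => ?_)
  have hzy : ⁅z, y⁆ = 0 := by
    rw [← lie_skew, (LieModule.mem_maxTrivSubmodule R L L z).mp hz y, neg_zero]
  simp [hzy, hη2 y]

theorem center_le_span_singleton [CommRing R] [LieAlgebra R L] {φ : L →ₗ[R] R}
    (hnd : ∀ x, φ x = 0 → (∀ y, φ y = 0 → φ ⁅x, y⁆ = 0) → x = 0)
    {η : L} (hη1 : φ η = 1) (hη2 : ∀ y : L, φ ⁅η, y⁆ = 0) :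
    (center R L).toSubmodule ≤ R ∙ η := fun z hz =>
  Submodule.mem_span_singleton.mpr ⟨φ z, (eq_smul_of_mem_center hnd hη1 hη2 hz).symm⟩

theorem center_eq_span_singleton [Field K] [LieAlgebra K L] [Nontrivial (center K L)]
    {φ : L →ₗ[K] K} (hnd : ∀ x, φ x = 0 → (∀ y, φ y = 0 → φ ⁅x, y⁆ = 0) → x = 0)
    {η : L} (hη1 : φ η = 1) (hη2 : ∀ y : L, φ ⁅η, y⁆ = 0) :
    (center K L).toSubmodule = K ∙ η := by
  obtain ⟨z, hz⟩ := exists_ne (0 : center K L)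
  have hzη : (z : L) = φ z • η := eq_smul_of_mem_center hnd hη1 hη2 z.2
  have hφz : φ z ≠ 0 := fun h => hz (Subtype.ext (by rw [hzη, h, zero_smul]; rfl))
  refine le_antisymm (center_le_span_singleton hnd hη1 hη2) ?_
  rw [← Submodule.span_singleton_smul_eq (isUnit_iff_ne_zero.mpr hφz), ← hzη,
    Submodule.span_singleton_le_iff_mem]
  exact z.2

end LieAlgebra

theorem stmt4_general (g : Type*) [LieRing g] [LieAlgebra ℝ g]
    [LieRing.IsNilpotent g]
    (φ : g →ₗ[ℝ] ℝ)
    (hnd : ∀ x, φ x = 0 → (∀ y, φ y = 0 → φ ⁅x, y⁆ = 0) → x = 0)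
    (η : g) (hη1 : φ η = 1) (hη2 : ∀ y : g, φ ⁅η, y⁆ = 0) :
    Module.finrank ℝ (LieAlgebra.center ℝ g) = 1 ∧
    (LieAlgebra.center ℝ g).toSubmodule ⊓ LinearMap.ker φ = ⊥ ∧
    (LieAlgebra.center ℝ g).toSubmodule = Submodule.span ℝ {η} := by
  have hη0 : η ≠ 0 := by rintro rfl; simp at hη1
  have : Nontrivial g := nontrivial_of_ne η 0 hη0
  have : Nontrivial (LieAlgebra.center ℝ g) := LieAlgebra.non_trivial_center_of_isNilpotent
  have hspan := LieAlgebra.center_eq_span_singleton hnd hη1 hη2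
  refine ⟨?_, ?_, hspan⟩
  · rw [← finrank_span_singleton (K := ℝ) hη0]
    exact (LinearEquiv.ofEq _ _ hspan).finrank_eq
  · rw [hspan, ← disjoint_iff, disjoint_comm, Submodule.disjoint_span_singleton]
    intro hη
    simp [LinearMap.mem_ker.mp hη] at hη1

/-- if a nilpotent real Lie algebra `g` of dimension `2m+1` carries a
contact form `φ` (with `dφ(x,y) = -φ⁅x,y⁆` non-degenerate on `D = ker φ`) coming from a
non-degenerate CR structure, and `η` is the Reeb field (`φ(η) = 1`, `i_η dφ = 0`), then the
center of `g` is one-dimensional, meets `D` trivially, and is spanned by `η`. -/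
theorem stmt4 (m : ℕ) (g : Type*) [LieRing g] [LieAlgebra ℝ g]
    [LieRing.IsNilpotent g] [FiniteDimensional ℝ g]
    (hdim : Module.finrank ℝ g = 2 * m + 1)
    (φ : g →ₗ[ℝ] ℝ) (hφ : φ ≠ 0)
    (hnd : ∀ x, φ x = 0 → (∀ y, φ y = 0 → φ ⁅x, y⁆ = 0) → x = 0)
    (η : g) (hη1 : φ η = 1) (hη2 : ∀ y : g, φ ⁅η, y⁆ = 0) :
    Module.finrank ℝ (LieAlgebra.center ℝ g) = 1 ∧
    (LieAlgebra.center ℝ g).toSubmodule ⊓ LinearMap.ker φ = ⊥ ∧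
    (LieAlgebra.center ℝ g).toSubmodule = Submodule.span ℝ {η} :=
  stmt4_general g φ hnd η hη1 hη2
end

section
/- Let g be a nilpotent real Lie algebra of dimension 2m+1 with a contact form φ whose restriction dφ|_D is non-degenerate on D = ker φ. Then the quotient n = g / Z(g) is a nilpotent Lie algebra of dimension 2m carrying a non-degenerate closed 2-form induced by dφ (i.e., n is symplectic). If moreover dφ|_D is definite (the strictly pseudoconvex case compatible with an integrable complex structure J on D), then n is abelian, hence g is a Heisenberg Lie algebra. -/
/-!
Since `g` is nilpotent its centre is nonzero, and non-degeneracy of `dφ` on `ker φ` makes it the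
line `ℝ Z` with `φ Z = 1`. Hence `dφ` descends to a non-degenerate form on `g ⧸ ℝ Z`, closed by
the Jacobi identity.

In the strictly pseudoconvex case, let `ζ ∈ ker φ` be central modulo `ℝ Z`. On `ker φ` the form
`(x, y) ↦ φ ⁅⁅x, y⁆, J ζ⁆` is `J`-anti-invariant (Jacobi identity, plus integrability at `(ζ, y)`)
and `J`-invariant (integrability at `(x, y)`), so it vanishes: `J ζ` is `dφ`-orthogonal to
`⁅g, g⁆`. If `⁅g, g⁆` were not central, nilpotency would give such a `ζ ≠ 0` in `⁅g, g⁆ + ℝ Z`,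
and then `φ ⁅ζ, J ζ⁆ = 0` contradicts positivity. So all brackets are multiples of `Z`, and a
unitary basis `e_i, J e_i` of `ker φ` for the metric `φ ⁅·, J ·⁆`, completed by `-Z`, is a
Heisenberg basis.
-/

open LieAlgebra

section Contact

variable {K L : Type*} [Field K] [LieRing L] [LieAlgebra K L]

lemma lie_eq_zero_of_mem_center_left {u : L} (hu : u ∈ center K L) (y : L) : ⁅u, y⁆ = 0 := by
  rw [← lie_skew, hu y, neg_zero]

lemma lie_eq_zero_of_mem_center_right {u : L} (hu : u ∈ center K L) (y : L) : ⁅y, u⁆ = 0 :=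
  hu y

lemma lie_lie_eq_zero_of_forall_lie_mem_center {ζ : L} (hζ : ∀ y, ⁅ζ, y⁆ ∈ center K L)
    (a b : L) : ⁅⁅a, b⁆, ζ⁆ = 0 := by
  rw [← lie_skew, leibniz_lie, lie_eq_zero_of_mem_center_left (hζ a),
    lie_eq_zero_of_mem_center_right (hζ b), add_zero, neg_zero]

def IsContact (φ : L →ₗ[K] K) : Prop :=
  ∀ x, φ x = 0 → (∀ y, φ y = 0 → φ ⁅x, y⁆ = 0) → x = 0

def dForm (φ : L →ₗ[K] K) : L →ₗ[K] L →ₗ[K] K :=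
  -(LieModule.toEnd K L L : L →ₗ[K] Module.End K L).compr₂ φ

@[simp] lemma dForm_apply (φ : L →ₗ[K] K) (x y : L) : dForm φ x y = -φ ⁅x, y⁆ := rfl

lemma dForm_lie_add_lie_add_lie (φ : L →ₗ[K] K) (x y z : L) :
    dForm φ ⁅x, y⁆ z + dForm φ ⁅y, z⁆ x + dForm φ ⁅z, x⁆ y = 0 := by
  have := congrArg φ (lie_jacobi z x y)
  simp only [dForm_apply]
  rw [← lie_skew ⁅x, y⁆, ← lie_skew ⁅y, z⁆, ← lie_skew ⁅z, x⁆]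
  simp only [map_neg, map_add, map_zero] at this ⊢
  linear_combination this

lemma center_le_ker_dForm (φ : L →ₗ[K] K) :
    (center K L).toSubmodule ≤ LinearMap.ker (dForm φ) := fun u hu ↦
  LinearMap.ext fun y ↦ by simp [lie_eq_zero_of_mem_center_left hu]

lemma center_le_ker_dForm_flip (φ : L →ₗ[K] K) :
    (center K L).toSubmodule ≤ LinearMap.ker (dForm φ).flip := fun u hu ↦
  LinearMap.ext fun y ↦ by simp [lie_eq_zero_of_mem_center_right hu]

def kerProj (φ : L →ₗ[K] K) (Z : L) : L →ₗ[K] L := LinearMap.id - φ.smulRight Z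

variable {φ : L →ₗ[K] K} {Z : L}

lemma kerProj_apply (x : L) : kerProj φ Z x = x - φ x • Z := rfl

lemma apply_kerProj (hφZ : φ Z = 1) (x : L) : φ (kerProj φ Z x) = 0 := by
  simp [kerProj_apply, hφZ]

lemma kerProj_of_apply_eq_zero {x : L} (hx : φ x = 0) : kerProj φ Z x = x := by
  simp [kerProj_apply, hx]

lemma kerProj_lie (hZ : Z ∈ center K L) (x y : L) : ⁅kerProj φ Z x, y⁆ = ⁅x, y⁆ := by
  simp [kerProj_apply, sub_lie, lie_eq_zero_of_mem_center_left hZ]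

lemma lie_kerProj (hZ : Z ∈ center K L) (x y : L) : ⁅x, kerProj φ Z y⁆ = ⁅x, y⁆ := by
  simp [kerProj_apply, lie_sub, lie_eq_zero_of_mem_center_right hZ]

lemma IsContact.eq_zero_of_mem_center (hφ : IsContact φ) {u : L} (hu : u ∈ center K L)
    (h : φ u = 0) : u = 0 :=
  hφ u h fun y _ ↦ by rw [lie_eq_zero_of_mem_center_left hu, map_zero]

lemma IsContact.exists_mem_center_apply_eq_one [LieRing.IsNilpotent L] [Nontrivial L]
    (hφ : IsContact φ) : ∃ Z ∈ center K L, φ Z = 1 := by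
  have := LieModule.nontrivial_max_triv_of_isNilpotent K L L
  obtain ⟨⟨z, hz⟩, hz0⟩ := exists_ne (0 : LieModule.maxTrivSubmodule K L L)
  have hφz : φ z ≠ 0 := fun h ↦ hz0 (Subtype.ext (hφ.eq_zero_of_mem_center hz h))
  exact ⟨(φ z)⁻¹ • z, (center K L).smul_mem _ hz, by simp [hφz]⟩

lemma IsContact.kerProj_eq_zero_of_mem_center (hφ : IsContact φ) (hZ : Z ∈ center K L)
    (hφZ : φ Z = 1) {u : L} (hu : u ∈ center K L) : kerProj φ Z u = 0 :=
  hφ.eq_zero_of_mem_center ((center K L).sub_mem hu ((center K L).smul_mem _ hZ))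
    (apply_kerProj hφZ u)

lemma IsContact.eq_smul_of_mem_center (hφ : IsContact φ) (hZ : Z ∈ center K L) (hφZ : φ Z = 1)
    {u : L} (hu : u ∈ center K L) : u = φ u • Z := by
  rw [← sub_eq_zero, ← kerProj_apply]
  exact hφ.kerProj_eq_zero_of_mem_center hZ hφZ hu

lemma IsContact.center_eq_span (hφ : IsContact φ) (hZ : Z ∈ center K L) (hφZ : φ Z = 1) :
    (center K L).toSubmodule = K ∙ Z :=
  le_antisymm (fun u hu ↦ Submodule.mem_span_singleton.mpr
      ⟨φ u, (hφ.eq_smul_of_mem_center hZ hφZ hu).symm⟩)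
    ((Submodule.span_singleton_le_iff_mem _ _).mpr hZ)

lemma IsContact.mem_center_of_forall_apply_lie_eq_zero (hφ : IsContact φ)
    (hZ : Z ∈ center K L) (hφZ : φ Z = 1) {x : L} (hx : ∀ y, φ ⁅x, y⁆ = 0) :
    x ∈ center K L := by
  have h : kerProj φ Z x = 0 :=
    hφ _ (apply_kerProj hφZ x) fun y _ ↦ by rw [kerProj_lie hZ, hx]
  rw [kerProj_apply, sub_eq_zero] at h
  exact h ▸ (center K L).smul_mem _ hZ

lemma IsContact.finrank_quotient_center [FiniteDimensional K L] (hφ : IsContact φ)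
    (hZ : Z ∈ center K L) (hφZ : φ Z = 1) :
    Module.finrank K (L ⧸ center K L) + 1 = Module.finrank K L := by
  have hZ0 : Z ≠ 0 := by rintro rfl; simp at hφZ
  have h1 : Module.finrank K (center K L).toSubmodule = 1 := by
    rw [hφ.center_eq_span hZ hφZ, finrank_span_singleton hZ0]
  rw [← h1]
  exact (center K L).toSubmodule.finrank_quotient_add_finrank

def dFormQuot (φ : L →ₗ[K] K) : (L ⧸ center K L) →ₗ[K] (L ⧸ center K L) →ₗ[K] K :=
  (dForm φ).liftQ₂ _ _ (center_le_ker_dForm φ) (center_le_ker_dForm_flip φ)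

lemma dFormQuot_mk (φ : L →ₗ[K] K) (x y : L) :
    dFormQuot φ (LieSubmodule.Quotient.mk x) (LieSubmodule.Quotient.mk y) = dForm φ x y :=
  rfl

lemma dFormQuot_lie_add_lie_add_lie (φ : L →ₗ[K] K) (a b c : L ⧸ center K L) :
    dFormQuot φ ⁅a, b⁆ c + dFormQuot φ ⁅b, c⁆ a + dFormQuot φ ⁅c, a⁆ b = 0 := by
  obtain ⟨x, rfl⟩ := LieSubmodule.Quotient.surjective_mk' (center K L) a
  obtain ⟨y, rfl⟩ := LieSubmodule.Quotient.surjective_mk' (center K L) b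
  obtain ⟨z, rfl⟩ := LieSubmodule.Quotient.surjective_mk' (center K L) c
  simp only [LieSubmodule.Quotient.mk'_apply, ← LieSubmodule.Quotient.mk_bracket, dFormQuot_mk]
  exact dForm_lie_add_lie_add_lie φ x y z

lemma IsContact.eq_zero_of_forall_dFormQuot_eq_zero (hφ : IsContact φ) (hZ : Z ∈ center K L)
    (hφZ : φ Z = 1) {v : L ⧸ center K L} (hv : ∀ w, dFormQuot φ v w = 0) : v = 0 := by
  obtain ⟨x, rfl⟩ := LieSubmodule.Quotient.surjective_mk' (center K L) v
  refine LieSubmodule.Quotient.mk_eq_zero'.mpr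
    (hφ.mem_center_of_forall_apply_lie_eq_zero hZ hφZ fun y ↦ ?_)
  simpa [dFormQuot_mk] using hv (LieSubmodule.Quotient.mk y)

end Contact

namespace LieModule

variable {R L M : Type*} [CommRing R] [LieRing L] [LieAlgebra R L] [AddCommGroup M] [Module R M]
  [LieRingModule L M] [LieModule R L M]

lemma lowerCentralSeries_one_le_of_forall_lie_mem {p : Submodule R M}
    (h : ∀ (x : L) (m : M), ⁅x, m⁆ ∈ p) : (lowerCentralSeries R L M 1).toSubmodule ≤ p := by
  rw [lowerCentralSeries_succ, lowerCentralSeries_zero,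
    LieSubmodule.lieIdeal_oper_eq_linear_span', Submodule.span_le]
  rintro _ ⟨x, -, m, -, rfl⟩
  exact h x m

lemma lowerCentralSeries_one_le_of_forall_lie_mem_imp_mem [IsNilpotent L M]
    (N : LieSubmodule R L M)
    (h : ∀ m ∈ lowerCentralSeries R L M 1, (∀ x : L, ⁅x, m⁆ ∈ N) → m ∈ N) :
    lowerCentralSeries R L M 1 ≤ N := by
  obtain ⟨k, hk⟩ := IsNilpotent.nilpotent R L M
  have step (j : ℕ) (hj : 1 ≤ j) (hN : lowerCentralSeries R L M (j + 1) ≤ N) :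
      lowerCentralSeries R L M j ≤ N := fun m hm ↦
    h m (antitone_lowerCentralSeries R L M hj hm) fun x ↦
      hN (lowerCentralSeries_succ R L M j ▸ LieSubmodule.lie_mem_lie (LieSubmodule.mem_top x) hm)
  have descend (d : ℕ) : ∀ j, 1 ≤ j → k ≤ j + d → lowerCentralSeries R L M j ≤ N := by
    induction d with
    | zero => exact fun j _ hkj ↦ (antitone_lowerCentralSeries R L M hkj).trans (hk ▸ bot_le)
    | succ d ih => exact fun j hj hkj ↦ step j hj (ih (j + 1) (by omega) (by omega))
  exact descend k 1 le_rfl (by omega)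

end LieModule

section Pseudoconvex

variable {g : Type*} [LieRing g] [LieAlgebra ℝ g] {φ : g →ₗ[ℝ] ℝ} {J : g →ₗ[ℝ] g} {Z : g}

structure IsStrictlyPseudoconvex (φ : g →ₗ[ℝ] ℝ) (J : g →ₗ[ℝ] g) : Prop where
  apply_eq_zero : ∀ x, φ x = 0 → φ (J x) = 0
  apply_apply : ∀ x, φ x = 0 → J (J x) = -x
  apply_lie_apply : ∀ x y, φ x = 0 → φ y = 0 → φ ⁅J x, J y⁆ = φ ⁅x, y⁆
  apply_lie_pos : ∀ x, φ x = 0 → x ≠ 0 → 0 < φ ⁅x, J x⁆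

def IsIntegrableCR (φ : g →ₗ[ℝ] ℝ) (J : g →ₗ[ℝ] g) : Prop :=
  ∀ x y, φ x = 0 → φ y = 0 →
    φ (⁅J x, J y⁆ - ⁅x, y⁆) = 0 ∧ J (⁅J x, J y⁆ - ⁅x, y⁆) = ⁅J x, y⁆ + ⁅x, J y⁆

namespace IsStrictlyPseudoconvex

lemma apply_apply_lie_eq_neg (hJ : IsStrictlyPseudoconvex φ J) {x y : g} (hx : φ x = 0)
    (hy : φ y = 0) : φ ⁅J x, y⁆ = -φ ⁅x, J y⁆ := by
  have h := hJ.apply_lie_apply x (J y) hx (hJ.apply_eq_zero y hy)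
  rw [hJ.apply_apply y hy, lie_neg, map_neg] at h
  exact neg_eq_iff_eq_neg.mp h

lemma apply_lie_apply_comm (hJ : IsStrictlyPseudoconvex φ J) {x y : g} (hx : φ x = 0)
    (hy : φ y = 0) : φ ⁅x, J y⁆ = φ ⁅y, J x⁆ := by
  rw [← neg_neg (φ ⁅x, J y⁆), ← hJ.apply_apply_lie_eq_neg hx hy, ← lie_skew, map_neg, neg_neg]

lemma kerProj_lie_apply (hJ : IsStrictlyPseudoconvex φ J)
    (hint : IsIntegrableCR φ J) (hφ : IsContact φ) (hZ : Z ∈ center ℝ g) (hφZ : φ Z = 1)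
    {ζ : g} (hζ : φ ζ = 0) (hζc : ∀ y, ⁅ζ, y⁆ ∈ center ℝ g) {y : g} (hy : φ y = 0) :
    kerProj φ Z ⁅J ζ, J y⁆ = -J (kerProj φ Z ⁅J ζ, y⁆) := by
  obtain ⟨hδ, hJδ⟩ := hint ζ y hζ hy
  have hπζ (y' : g) : kerProj φ Z ⁅ζ, y'⁆ = 0 := hφ.kerProj_eq_zero_of_mem_center hZ hφZ (hζc y')
  have h₁ : kerProj φ Z ⁅J ζ, J y⁆ = ⁅J ζ, J y⁆ - ⁅ζ, y⁆ := by
    rw [← kerProj_of_apply_eq_zero hδ, map_sub, hπζ, sub_zero]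
  have h₂ : kerProj φ Z ⁅J ζ, y⁆ = J (⁅J ζ, J y⁆ - ⁅ζ, y⁆) := by
    rw [← kerProj_of_apply_eq_zero (hJ.apply_eq_zero _ hδ), hJδ, map_add, hπζ, add_zero]
  rw [h₁, h₂, hJ.apply_apply _ hδ, neg_neg]

lemma apply_lie_lie_apply_eq_zero (hJ : IsStrictlyPseudoconvex φ J)
    (hint : IsIntegrableCR φ J) (hφ : IsContact φ) (hZ : Z ∈ center ℝ g) (hφZ : φ Z = 1)
    {ζ : g} (hζ : φ ζ = 0) (hζc : ∀ y, ⁅ζ, y⁆ ∈ center ℝ g) (x y : g) : φ ⁅⁅x, y⁆, J ζ⁆ = 0 := by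
  have jacobi (x y : g) : φ ⁅⁅x, y⁆, J ζ⁆ =
      φ ⁅y, kerProj φ Z ⁅J ζ, x⁆⁆ - φ ⁅x, kerProj φ Z ⁅J ζ, y⁆⁆ := by
    rw [lie_kerProj hZ, lie_kerProj hZ, ← lie_skew, leibniz_lie, ← lie_skew ⁅J ζ, x⁆, ← map_sub]
    abel_nf
  have hπ (x : g) : φ (kerProj φ Z ⁅J ζ, x⁆) = 0 := apply_kerProj hφZ _
  have odd {x y : g} (hx : φ x = 0) (hy : φ y = 0) :
      φ ⁅⁅J x, J y⁆, J ζ⁆ = -φ ⁅⁅x, y⁆, J ζ⁆ := by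
    rw [jacobi, jacobi, hJ.kerProj_lie_apply hint hφ hZ hφZ hζ hζc hx,
      hJ.kerProj_lie_apply hint hφ hZ hφZ hζ hζc hy, lie_neg, lie_neg, map_neg, map_neg,
      hJ.apply_lie_apply _ _ hy (hπ x), hJ.apply_lie_apply _ _ hx (hπ y)]
    ring
  have even {x y : g} (hx : φ x = 0) (hy : φ y = 0) :
      φ ⁅⁅J x, J y⁆, J ζ⁆ = φ ⁅⁅x, y⁆, J ζ⁆ := by
    obtain ⟨hδ, hJδ⟩ := hint x y hx hy
    have h := hJ.apply_lie_apply _ _ hδ (hJ.apply_eq_zero ζ hζ)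
    rw [hJδ, hJ.apply_apply ζ hζ, lie_neg, add_lie, lie_lie_eq_zero_of_forall_lie_mem_center hζc,
      lie_lie_eq_zero_of_forall_lie_mem_center hζc, add_zero, neg_zero, map_zero, sub_lie,
      map_sub] at h
    linarith
  rw [← kerProj_lie hZ x, ← lie_kerProj hZ _ y]
  linarith [odd (apply_kerProj hφZ x) (apply_kerProj hφZ y),
    even (apply_kerProj hφZ x) (apply_kerProj hφZ y)]

lemma mem_center_of_mem_lowerCentralSeries (hJ : IsStrictlyPseudoconvex φ J)
    (hint : IsIntegrableCR φ J) (hφ : IsContact φ) (hZ : Z ∈ center ℝ g) (hφZ : φ Z = 1) {w : g}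
    (hw : w ∈ LieModule.lowerCentralSeries ℝ g g 1) (hwc : ∀ y : g, ⁅y, w⁆ ∈ center ℝ g) :
    w ∈ center ℝ g := by
  have hζ := apply_kerProj hφZ w
  have hζc (y : g) : ⁅kerProj φ Z w, y⁆ ∈ center ℝ g := by
    rw [kerProj_lie hZ, ← lie_skew]
    exact (center ℝ g).neg_mem (hwc y)
  have hwζ : φ ⁅w, J (kerProj φ Z w)⁆ = 0 := by
    have := LieModule.lowerCentralSeries_one_le_of_forall_lie_mem
      (p := LinearMap.ker ((dForm φ).flip (J (kerProj φ Z w)))) (fun (x y : g) ↦ by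
        simp only [LinearMap.mem_ker, LinearMap.flip_apply, dForm_apply, neg_eq_zero]
        exact hJ.apply_lie_lie_apply_eq_zero hint hφ hZ hφZ hζ hζc x y) hw
    simpa using this
  have hζ0 : kerProj φ Z w = 0 := by
    by_contra hne
    have := hJ.apply_lie_pos _ hζ hne
    rw [kerProj_lie hZ, hwζ] at this
    exact this.false
  rw [kerProj_apply, sub_eq_zero] at hζ0
  exact hζ0 ▸ (center ℝ g).smul_mem _ hZ

lemma lie_mem_center [LieRing.IsNilpotent g] (hJ : IsStrictlyPseudoconvex φ J)
    (hint : IsIntegrableCR φ J) (hφ : IsContact φ) (hZ : Z ∈ center ℝ g) (hφZ : φ Z = 1) (x y : g) :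
    ⁅x, y⁆ ∈ center ℝ g := by
  have hle := LieModule.lowerCentralSeries_one_le_of_forall_lie_mem_imp_mem (center ℝ g)
    fun w hw hwc ↦ hJ.mem_center_of_mem_lowerCentralSeries hint hφ hZ hφZ hw hwc
  refine hle ?_
  rw [LieModule.lowerCentralSeries_succ, LieModule.lowerCentralSeries_zero]
  exact LieSubmodule.lie_mem_lie (LieSubmodule.mem_top x) (LieSubmodule.mem_top y)

lemma exists_mem_apply_lie_apply_eq_one (hJ : IsStrictlyPseudoconvex φ J) {W : Submodule ℝ g}
    (hW : W ≤ LinearMap.ker φ) (hW0 : W ≠ ⊥) : ∃ e ∈ W, φ ⁅e, J e⁆ = 1 := by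
  obtain ⟨v, hvW, hv0⟩ := Submodule.exists_mem_ne_zero_of_ne_bot hW0
  have hpos := hJ.apply_lie_pos v (hW hvW) hv0
  refine ⟨(√(φ ⁅v, J v⁆))⁻¹ • v, W.smul_mem _ hvW, ?_⟩
  simp only [map_smul, lie_smul, smul_lie, smul_eq_mul]
  rw [← mul_assoc, ← mul_inv, Real.mul_self_sqrt hpos.le, inv_mul_cancel₀ hpos.ne']

lemma exists_unitary_family [FiniteDimensional ℝ g] (hJ : IsStrictlyPseudoconvex φ J)
    (W : Submodule ℝ g) (hW : W ≤ LinearMap.ker φ) (hJW : ∀ x ∈ W, J x ∈ W) :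
    ∃ (k : ℕ) (e : Fin k → g), (∀ i, e i ∈ W) ∧
      (∀ i j, φ ⁅e i, J (e j)⁆ = if i = j then 1 else 0) ∧ (∀ i j, φ ⁅e i, e j⁆ = 0) ∧
      W ≤ Submodule.span ℝ (Set.range (Sum.elim e (J ∘ e))) := by
  induction W using WellFoundedLT.induction with
  | _ W ih =>
  rcases eq_or_ne W ⊥ with rfl | hW0
  · exact ⟨0, Fin.elim0, fun i ↦ i.elim0, fun i ↦ i.elim0, fun i ↦ i.elim0, bot_le⟩
  obtain ⟨e₀, he₀W, he₀⟩ := hJ.exists_mem_apply_lie_apply_eq_one hW hW0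
  have he₀φ : φ e₀ = 0 := hW he₀W
  let W' := W ⊓ LinearMap.ker (φ ∘ₗ LieModule.toEnd ℝ g g e₀ ∘ₗ J) ⊓
    LinearMap.ker (φ ∘ₗ LieModule.toEnd ℝ g g e₀)
  have mem_W' {x : g} : x ∈ W' ↔ x ∈ W ∧ φ ⁅e₀, J x⁆ = 0 ∧ φ ⁅e₀, x⁆ = 0 := by
    simp [W', and_assoc]
  have hW'W : W' ≤ W := fun x hx ↦ (mem_W'.mp hx).1
  have hJW' (x : g) (hx : x ∈ W') : J x ∈ W' := by
    obtain ⟨hxW, h₁, h₂⟩ := mem_W'.mp hx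
    refine mem_W'.mpr ⟨hJW x hxW, ?_, h₁⟩
    rw [hJ.apply_apply x (hW hxW), lie_neg, map_neg, h₂, neg_zero]
  have hlt : W' < W := lt_of_le_of_ne hW'W fun h ↦ by
    have := (mem_W'.mp (h ▸ he₀W)).2.1
    rw [he₀] at this
    exact one_ne_zero this
  obtain ⟨k, e, heW', he₁, he₂, hspan⟩ := ih W' hlt (hW'W.trans hW) hJW'
  have heW (i : Fin k) := mem_W'.mp (heW' i)
  refine ⟨k + 1, Fin.cons e₀ e, Fin.cons he₀W fun i ↦ (heW i).1, ?_, ?_, ?_⟩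
  · simp only [Fin.forall_fin_succ, Fin.cons_zero, Fin.cons_succ, Fin.succ_inj,
      (Fin.succ_ne_zero _).symm, Fin.succ_ne_zero, if_true, if_false]
    refine ⟨⟨he₀, fun j ↦ (heW j).2.1⟩, fun i ↦ ⟨?_, he₁ i⟩⟩
    rw [hJ.apply_lie_apply_comm (hW (heW i).1) he₀φ, (heW i).2.1]
  · simp only [Fin.forall_fin_succ, Fin.cons_zero, Fin.cons_succ]
    refine ⟨⟨lie_self e₀ ▸ map_zero φ, fun j ↦ (heW j).2.2⟩, fun i ↦ ⟨?_, he₂ i⟩⟩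
    rw [← lie_skew, map_neg, (heW i).2.2, neg_zero]
  · intro w hw
    set a := φ ⁅e₀, J w⁆
    set b := φ ⁅e₀, w⁆
    have hw' : w - a • e₀ - b • J e₀ ∈ W' := by
      refine mem_W'.mpr ⟨W.sub_mem (W.sub_mem hw (W.smul_mem _ he₀W)) (W.smul_mem _ (hJW _ he₀W)),
        ?_, ?_⟩
      · simp only [map_sub, map_smul, lie_sub, lie_smul, hJ.apply_apply e₀ he₀φ, lie_neg,
          map_neg, he₀, lie_self, map_zero, smul_eq_mul]
        ring
      · simp only [map_sub, map_smul, lie_sub, lie_smul, he₀, lie_self, map_zero, smul_eq_mul]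
        ring
    let f : Fin (k + 1) ⊕ Fin (k + 1) → g := Sum.elim (Fin.cons e₀ e) (J ∘ Fin.cons e₀ e)
    have hsub : Set.range (Sum.elim e (J ∘ e)) ⊆ Set.range f := by
      rintro _ ⟨i | i, rfl⟩
      · exact ⟨Sum.inl i.succ, by simp [f]⟩
      · exact ⟨Sum.inr i.succ, by simp [f]⟩
    have he₀S : e₀ ∈ Submodule.span ℝ (Set.range f) :=
      Submodule.subset_span ⟨Sum.inl 0, by simp [f]⟩
    have hJe₀S : J e₀ ∈ Submodule.span ℝ (Set.range f) :=
      Submodule.subset_span ⟨Sum.inr 0, by simp [f]⟩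
    rw [show w = (w - a • e₀ - b • J e₀) + a • e₀ + b • J e₀ by abel]
    exact add_mem (add_mem (Submodule.span_mono hsub (hspan hw')) (Submodule.smul_mem _ _ he₀S))
      (Submodule.smul_mem _ _ hJe₀S)

lemma linearIndependent_sum_elim (hJ : IsStrictlyPseudoconvex φ J) {k : ℕ} {e : Fin k → g}
    (heφ : ∀ i, φ (e i) = 0) (he₁ : ∀ i j, φ ⁅e i, J (e j)⁆ = if i = j then 1 else 0)
    (he₂ : ∀ i j, φ ⁅e i, e j⁆ = 0) : LinearIndependent ℝ (Sum.elim e (J ∘ e)) := by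
  have hf (a b : Fin k ⊕ Fin k) :
      φ ⁅Sum.elim e (J ∘ e) a, J (Sum.elim e (J ∘ e) b)⁆ = if a = b then 1 else 0 := by
    rcases a with i | i <;> rcases b with j | j <;>
      simp only [Sum.elim_inl, Sum.elim_inr, Function.comp_apply, Sum.inl.injEq,
        Sum.inr.injEq, reduceCtorEq, if_false]
    · exact he₁ i j
    · rw [hJ.apply_apply _ (heφ j), lie_neg, map_neg, he₂, neg_zero]
    · rw [hJ.apply_lie_apply _ _ (heφ i) (heφ j), he₂]
    · rw [hJ.apply_apply _ (heφ j), lie_neg, map_neg, hJ.apply_apply_lie_eq_neg (heφ i) (heφ j),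
        neg_neg, he₁]
  refine LinearMap.linearIndependent_of_isOrthoᵢ (B := (dForm φ).compl₂ J)
    (fun a b hab ↦ ?_) fun a ↦ ?_
  · simp [Function.onFun, hf, hab]
  · simp [hf]

lemma exists_heisenberg_basis [FiniteDimensional ℝ g] {m : ℕ} (hJ : IsStrictlyPseudoconvex φ J)
    (hφ : IsContact φ) (hZ : Z ∈ center ℝ g) (hφZ : φ Z = 1)
    (hdim : Module.finrank ℝ g = 2 * m + 1) (hc : ∀ x y : g, ⁅x, y⁆ ∈ center ℝ g) :
    ∃ b : Module.Basis (Fin m ⊕ Fin m ⊕ Unit) ℝ g,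
      (∀ i j : Fin m, ⁅b (Sum.inl i), b (Sum.inr (Sum.inl j))⁆
          = if i = j then -b (Sum.inr (Sum.inr ())) else 0) ∧
      (∀ i j : Fin m, ⁅b (Sum.inl i), b (Sum.inl j)⁆ = 0) ∧
      (∀ i j : Fin m, ⁅b (Sum.inr (Sum.inl i)), b (Sum.inr (Sum.inl j))⁆ = 0) ∧
      (∀ v : g, ⁅b (Sum.inr (Sum.inr ())), v⁆ = 0) := by
  obtain ⟨k, e, heφ, he₁, he₂, hspan⟩ :=
    hJ.exists_unitary_family (LinearMap.ker φ) le_rfl fun x hx ↦ hJ.apply_eq_zero x hx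
  have heφ (i : Fin k) : φ (e i) = 0 := heφ i
  let f : Fin k ⊕ Fin k → g := Sum.elim e (J ∘ e)
  have hind : LinearIndependent ℝ f := hJ.linearIndependent_sum_elim heφ he₁ he₂
  have hkm : k ≤ m := by
    have := hind.fintype_card_le_finrank
    simp only [Fintype.card_sum, Fintype.card_fin, hdim] at this
    omega
  let v : Fin k ⊕ Fin k ⊕ Unit → g := Sum.elim e (Sum.elim (J ∘ e) fun _ ↦ -Z)
  have hv : ⊤ ≤ Submodule.span ℝ (Set.range v) := by
    have hfv : Set.range f ⊆ Set.range v := by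
      rintro _ ⟨i | i, rfl⟩
      · exact ⟨Sum.inl i, rfl⟩
      · exact ⟨Sum.inr (Sum.inl i), rfl⟩
    have hZv : Z ∈ Submodule.span ℝ (Set.range v) :=
      neg_neg Z ▸ Submodule.neg_mem _ (Submodule.subset_span ⟨Sum.inr (Sum.inr ()), rfl⟩)
    intro x _
    rw [← sub_add_cancel x (φ x • Z), ← kerProj_apply]
    exact add_mem (Submodule.span_mono hfv (hspan (apply_kerProj hφZ x)))
      (Submodule.smul_mem _ _ hZv)
  have hmk : m ≤ k := by
    have := finrank_le_of_span_eq_top (top_le_iff.mp hv)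
    simp only [Fintype.card_sum, Fintype.card_fin, Fintype.card_unit, hdim] at this
    omega
  obtain rfl : k = m := le_antisymm hkm hmk
  have hcard : Fintype.card (Fin k ⊕ Fin k ⊕ Unit) = Module.finrank ℝ g := by
    simp only [Fintype.card_sum, Fintype.card_fin, Fintype.card_unit, hdim]
    ring
  have hlie (x y : g) : ⁅x, y⁆ = φ ⁅x, y⁆ • Z := hφ.eq_smul_of_mem_center hZ hφZ (hc x y)
  refine ⟨basisOfTopLeSpanOfCardEqFinrank v hv hcard, ?_, ?_, ?_, ?_⟩ <;>
    simp only [coe_basisOfTopLeSpanOfCardEqFinrank, v, Sum.elim_inl, Sum.elim_inr,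
      Function.comp_apply]
  · intro i j
    rw [hlie, he₁, neg_neg]
    split_ifs <;> simp
  · intro i j
    rw [hlie, he₂, zero_smul]
  · intro i j
    rw [hlie, hJ.apply_lie_apply _ _ (heφ i) (heφ j), he₂, zero_smul]
  · exact lie_eq_zero_of_mem_center_left ((center ℝ g).neg_mem hZ)

end IsStrictlyPseudoconvex

end Pseudoconvex

theorem stmt5_general (m : ℕ) (g : Type*) [LieRing g] [LieAlgebra ℝ g]
    [LieRing.IsNilpotent g] [FiniteDimensional ℝ g]
    (hdim : Module.finrank ℝ g = 2 * m + 1)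
    (φ : g →ₗ[ℝ] ℝ)
    (hnd : ∀ x, φ x = 0 → (∀ y, φ y = 0 → φ ⁅x, y⁆ = 0) → x = 0) :
    (Module.finrank ℝ (g ⧸ LieAlgebra.center ℝ g) = 2 * m ∧
      ∃ ω : (g ⧸ LieAlgebra.center ℝ g) →ₗ[ℝ] (g ⧸ LieAlgebra.center ℝ g) →ₗ[ℝ] ℝ,
        (∀ x y : g, ω (LieSubmodule.Quotient.mk x) (LieSubmodule.Quotient.mk y)
            = -φ ⁅x, y⁆) ∧
        (∀ v, (∀ w, ω v w = 0) → v = 0) ∧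
        (∀ a b c : g ⧸ LieAlgebra.center ℝ g,
          ω ⁅a, b⁆ c + ω ⁅b, c⁆ a + ω ⁅c, a⁆ b = 0)) ∧
    (∀ J : g →ₗ[ℝ] g,
      (∀ x, φ x = 0 → φ (J x) = 0) →
      (∀ x, φ x = 0 → J (J x) = -x) →
      (∀ x y, φ x = 0 → φ y = 0 → φ ⁅J x, J y⁆ = φ ⁅x, y⁆) →
      (∀ x, φ x = 0 → x ≠ 0 → 0 < φ ⁅x, J x⁆) →
      (∀ x y, φ x = 0 → φ y = 0 →
        φ (⁅J x, J y⁆ - ⁅x, y⁆) = 0 ∧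
        J (⁅J x, J y⁆ - ⁅x, y⁆) = ⁅J x, y⁆ + ⁅x, J y⁆) →
      ((∀ x y : g, ⁅x, y⁆ ∈ LieAlgebra.center ℝ g) ∧
        ∃ b : Module.Basis (Fin m ⊕ Fin m ⊕ Unit) ℝ g,
          (∀ i j : Fin m, ⁅b (Sum.inl i), b (Sum.inr (Sum.inl j))⁆
              = if i = j then -b (Sum.inr (Sum.inr ())) else 0) ∧
          (∀ i j : Fin m, ⁅b (Sum.inl i), b (Sum.inl j)⁆ = 0) ∧
          (∀ i j : Fin m, ⁅b (Sum.inr (Sum.inl i)), b (Sum.inr (Sum.inl j))⁆ = 0) ∧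
          (∀ v : g, ⁅b (Sum.inr (Sum.inr ())), v⁆ = 0))) := by
  have hφ : IsContact φ := hnd
  have : Nontrivial g := Module.nontrivial_of_finrank_pos (R := ℝ) (by omega)
  obtain ⟨Z, hZ, hφZ⟩ := hφ.exists_mem_center_apply_eq_one
  refine ⟨⟨?_, dFormQuot φ, fun x y ↦ rfl, fun v ↦ hφ.eq_zero_of_forall_dFormQuot_eq_zero hZ hφZ,
    dFormQuot_lie_add_lie_add_lie φ⟩, fun J hJ₁ hJ₂ hJ₃ hJ₄ hint ↦ ?_⟩
  · have := hφ.finrank_quotient_center hZ hφZ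
    omega
  · have hJ : IsStrictlyPseudoconvex φ J := ⟨hJ₁, hJ₂, hJ₃, hJ₄⟩
    have hc := hJ.lie_mem_center hint hφ hZ hφZ
    exact ⟨hc, hJ.exists_heisenberg_basis hφ hZ hφZ hdim hc⟩

/-- let `g` be a nilpotent real Lie algebra of dimension `2m+1` with a contact
form `φ` whose differential `dφ(x,y) = -φ⁅x,y⁆` is non-degenerate on `D = ker φ`. Then the
quotient `n = g / Z(g)` has dimension `2m` and carries a closed non-degenerate (symplectic)
2-form induced by `dφ`. If moreover `dφ|_D` is definite with respect to an integrable
compatible complex structure `J` on `D` (the strictly pseudoconvex case), then `n` is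
abelian (all brackets of `g` are central), hence `g` is a Heisenberg Lie algebra:
there is a basis `X_1,…,X_m, Y_1,…,Y_m, Z` whose only nonzero brackets are
`[X_i, Y_i] = -Z`, with `Z` central. -/
theorem stmt5 (m : ℕ) (g : Type*) [LieRing g] [LieAlgebra ℝ g]
    [LieRing.IsNilpotent g] [FiniteDimensional ℝ g]
    (hdim : Module.finrank ℝ g = 2 * m + 1)
    (φ : g →ₗ[ℝ] ℝ) (hφ : φ ≠ 0)
    (hnd : ∀ x, φ x = 0 → (∀ y, φ y = 0 → φ ⁅x, y⁆ = 0) → x = 0) :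
    (Module.finrank ℝ (g ⧸ LieAlgebra.center ℝ g) = 2 * m ∧
      ∃ ω : (g ⧸ LieAlgebra.center ℝ g) →ₗ[ℝ] (g ⧸ LieAlgebra.center ℝ g) →ₗ[ℝ] ℝ,
        (∀ x y : g, ω (LieSubmodule.Quotient.mk x) (LieSubmodule.Quotient.mk y)
            = -φ ⁅x, y⁆) ∧
        (∀ v, (∀ w, ω v w = 0) → v = 0) ∧
        (∀ a b c : g ⧸ LieAlgebra.center ℝ g,
          ω ⁅a, b⁆ c + ω ⁅b, c⁆ a + ω ⁅c, a⁆ b = 0)) ∧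
    (∀ J : g →ₗ[ℝ] g,
      (∀ x, φ x = 0 → φ (J x) = 0) →
      (∀ x, φ x = 0 → J (J x) = -x) →
      (∀ x y, φ x = 0 → φ y = 0 → φ ⁅J x, J y⁆ = φ ⁅x, y⁆) →
      (∀ x, φ x = 0 → x ≠ 0 → 0 < φ ⁅x, J x⁆) →
      (∀ x y, φ x = 0 → φ y = 0 →
        φ (⁅J x, J y⁆ - ⁅x, y⁆) = 0 ∧
        J (⁅J x, J y⁆ - ⁅x, y⁆) = ⁅J x, y⁆ + ⁅x, J y⁆) →
      ((∀ x y : g, ⁅x, y⁆ ∈ LieAlgebra.center ℝ g) ∧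
        ∃ b : Module.Basis (Fin m ⊕ Fin m ⊕ Unit) ℝ g,
          (∀ i j : Fin m, ⁅b (Sum.inl i), b (Sum.inr (Sum.inl j))⁆
              = if i = j then -b (Sum.inr (Sum.inr ())) else 0) ∧
          (∀ i j : Fin m, ⁅b (Sum.inl i), b (Sum.inl j)⁆ = 0) ∧
          (∀ i j : Fin m, ⁅b (Sum.inr (Sum.inl i)), b (Sum.inr (Sum.inl j))⁆ = 0) ∧
          (∀ v : g, ⁅b (Sum.inr (Sum.inr ())), v⁆ = 0))) :=
  stmt5_general m g hdim φ hnd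
end

section
/- Let h = h_{2m+1} be the Heisenberg Lie algebra with basis {X_1,...,X_m, Y_1,...,Y_m, Z}, [X_i,Y_i] = -Z, and let t = span{U} act by ad_U(X_i) = X_i, ad_U(Y_i) = Y_i, ad_U(Z) = 2Z. If τ: h → t is a Lie algebra homomorphism with τ ≠ 0, then ker τ is a codimension-one ideal of h containing Z, ker τ ≅ R ⊕ h_{2m-1}, and the modification h(τ) is isomorphic to the semidirect product (R ⊕ h_{2m-1}) ⋊ R with diagonal R-action. -/
/-- The Heisenberg Lie algebra `h_{2m+1}`: `(a, b, c)` stands for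
`Σ a_i X_i + Σ b_i Y_i + c Z`, with only nonzero brackets `[X_i, Y_i] = -Z`. -/
def hbr (m : ℕ) (v w : (Fin m → ℝ) × (Fin m → ℝ) × ℝ) : (Fin m → ℝ) × (Fin m → ℝ) × ℝ :=
  (0, 0, -(∑ i, (v.1 i * w.2.1 i - v.2.1 i * w.1 i)))

/-- The derivation `ad_U` of `h_{2m+1}`: `ad_U(X_i) = X_i`, `ad_U(Y_i) = Y_i`,
`ad_U(Z) = 2Z`. -/
def adU (m : ℕ) (v : (Fin m → ℝ) × (Fin m → ℝ) × ℝ) : (Fin m → ℝ) × (Fin m → ℝ) × ℝ :=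
  (v.1, v.2.1, 2 * v.2.2)

/-- The modified bracket `[A,B]_τ = [A,B] + ad_{τ(A)·U}(B) - ad_{τ(B)·U}(A)`. -/
def hbrτ (m : ℕ) (τ : ((Fin m → ℝ) × (Fin m → ℝ) × ℝ) →ₗ[ℝ] ℝ)
    (v w : (Fin m → ℝ) × (Fin m → ℝ) × ℝ) : (Fin m → ℝ) × (Fin m → ℝ) × ℝ :=
  hbr m v w + τ v • adU m w - τ w • adU m v

/-- The bracket of `ℝ ⊕ h_{2m-1}` (an element is `(s, h)` with `h` in the Heisenberg
algebra `h_{2(m-1)+1}` and `s` in the abelian `ℝ`-factor). -/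
def rhbr (m : ℕ) (v w : ℝ × ((Fin (m - 1) → ℝ) × (Fin (m - 1) → ℝ) × ℝ)) :
    ℝ × ((Fin (m - 1) → ℝ) × (Fin (m - 1) → ℝ) × ℝ) :=
  (0, hbr (m - 1) v.2 w.2)

/-- The bracket of the semidirect product `(ℝ ⊕ h_{2m-1}) ⋊ ℝ` with diagonal action of
the generator `T` of the `ℝ`-factor: `ad_T = 1` on the `ℝ`-summand and on the `X_i, Y_i`,
and `ad_T(Z) = 2Z`. An element is `((s, h), t)`. -/
def sdbr (m : ℕ) (v w : (ℝ × ((Fin (m - 1) → ℝ) × (Fin (m - 1) → ℝ) × ℝ)) × ℝ) :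
    (ℝ × ((Fin (m - 1) → ℝ) × (Fin (m - 1) → ℝ) × ℝ)) × ℝ :=
  (rhbr m v.1 w.1 + v.2 • (w.1.1, w.1.2.1, w.1.2.2.1, 2 * w.1.2.2.2)
      - w.2 • (v.1.1, v.1.2.1, v.1.2.2.1, 2 * v.1.2.2.2), 0)

/-! Since `Z = -[X₁, Y₁]`, the homomorphism `τ` kills `Z` and is a nonzero functional on the
symplectic space `ℝ²ᵐ = span{Xᵢ, Yᵢ}`. Symplectic transvections act transitively on nonzero
vectors, hence, through the duality given by the symplectic form, on nonzero functionals; and a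
symplectic map extends to an automorphism of `h` fixing `Z` and commuting with `ad_U`. So we may
assume that `τ` is the `X₁`-coordinate, where `ker τ = ℝ Y₁ ⊕ h_{2m-1}` and `X₁` spans a
complement acting diagonally on `ker τ` in `h(τ)`. -/

namespace LinearMap.BilinForm

variable {K V : Type*} [Field K] [AddCommGroup V] [Module K V] {B : LinearMap.BilinForm K V}

def symplecticTransvection (hB : B.IsAlt) (c : K) (w : V) : B.IsometryEquiv B :=
  { LinearEquiv.transvection (f := c • B w) (v := w) (by simp [hB.self_eq_zero]) with
    map_app' x y := by
      change B (x + (c * B w x) • w) (y + (c * B w y) • w) = B x y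
      simp only [map_add, map_smul, LinearMap.add_apply, LinearMap.smul_apply, smul_eq_mul,
        hB.self_eq_zero, ← hB.neg_eq w x]
      ring }

theorem symplecticTransvection_apply (hB : B.IsAlt) (c : K) (w x : V) :
    symplecticTransvection hB c w x = x + (c * B w x) • w := rfl

theorem exists_isometryEquiv_apply_eq_of_apply_ne_zero (hB : B.IsAlt) {u v : V}
    (h : B v u ≠ 0) : ∃ S : B.IsometryEquiv B, S u = v :=
  -- `B (v - u) u = B v u`, so this transvection moves `u` by exactly `v - u`.
  ⟨symplecticTransvection hB (B v u)⁻¹ (v - u), by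
    simp [symplecticTransvection_apply, hB.self_eq_zero, h]⟩

theorem exists_isometryEquiv_apply_eq (hB : B.IsAlt) (hB' : B.SeparatingLeft) {u v : V}
    (hu : u ≠ 0) (hv : v ≠ 0) : ∃ S : B.IsometryEquiv B, S u = v := by
  -- Go from `u` to `v` through a vector `z` paired nontrivially with both.
  have exists_ne {x : V} (hx : x ≠ 0) : ∃ z, B x z ≠ 0 := by
    by_contra! h
    exact hx (hB' x h)
  obtain ⟨z, huz, hvz⟩ : ∃ z, B u z ≠ 0 ∧ B v z ≠ 0 := by
    obtain ⟨z₁, h₁⟩ := exists_ne hu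
    obtain ⟨z₂, h₂⟩ := exists_ne hv
    by_cases h₁₂ : B u z₂ = 0
    · by_cases h₂₁ : B v z₁ = 0
      · exact ⟨z₁ + z₂, by simpa [h₁₂], by simpa [h₂₁]⟩
      · exact ⟨z₁, h₁, h₂₁⟩
    · exact ⟨z₂, h₁₂, h₂⟩
  obtain ⟨S₁, hS₁⟩ := exists_isometryEquiv_apply_eq_of_apply_ne_zero hB (u := u) (v := z)
    (by rwa [← hB.neg_eq, neg_ne_zero])
  obtain ⟨S₂, hS₂⟩ := exists_isometryEquiv_apply_eq_of_apply_ne_zero hB hvz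
  exact ⟨S₁.trans S₂, (congrArg S₂ hS₁).trans hS₂⟩

theorem exists_isometryEquiv_comp_eq [FiniteDimensional K V] (hB : B.IsAlt)
    (hB' : B.Nondegenerate) {φ ψ : Module.Dual K V} (hφ : φ ≠ 0) (hψ : ψ ≠ 0) :
    ∃ S : B.IsometryEquiv B, ∀ x, φ (S x) = ψ x := by
  set u := (B.toDual hB').symm φ
  set u₀ := (B.toDual hB').symm ψ
  obtain ⟨S, hS⟩ := exists_isometryEquiv_apply_eq hB hB'.1 (u := u₀) (v := u)
    (by simpa [u₀] using hψ) (by simpa [u] using hφ)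
  refine ⟨S, fun x => ?_⟩
  calc φ (S x) = B u (S x) := (apply_toDual_symm_apply φ _).symm
    _ = B (S u₀) (S x) := by rw [hS]
    _ = ψ x := by rw [S.map_app, apply_toDual_symm_apply]

end LinearMap.BilinForm

open Matrix

section SymplecticForm

variable (K ι : Type*) [CommRing K] [Fintype ι]

def symplecticForm : LinearMap.BilinForm K ((ι → K) × (ι → K)) :=
  LinearMap.mk₂ K (fun v w => v.1 ⬝ᵥ w.2 - v.2 ⬝ᵥ w.1)
    (fun _ _ _ => by simp only [Prod.fst_add, Prod.snd_add, add_dotProduct]; ring)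
    (fun _ _ _ => by simp only [Prod.smul_fst, Prod.smul_snd, smul_dotProduct, smul_eq_mul]; ring)
    (fun _ _ _ => by simp only [Prod.fst_add, Prod.snd_add, dotProduct_add]; ring)
    (fun _ _ _ => by simp only [Prod.smul_fst, Prod.smul_snd, dotProduct_smul, smul_eq_mul]; ring)

variable {K ι}

@[simp]
theorem symplecticForm_apply (v w : (ι → K) × (ι → K)) :
    symplecticForm K ι v w = v.1 ⬝ᵥ w.2 - v.2 ⬝ᵥ w.1 := rfl

theorem symplecticForm_isAlt : (symplecticForm K ι).IsAlt := fun v => by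
  simp [dotProduct_comm v.1]

theorem symplecticForm_nondegenerate [DecidableEq ι] : (symplecticForm K ι).Nondegenerate := by
  have hrefl : LinearMap.IsRefl (symplecticForm K ι) :=
    LinearMap.IsAlt.isRefl (B := symplecticForm K ι) symplecticForm_isAlt
  refine hrefl.nondegenerate_iff_separatingLeft.mpr fun v hv => ?_
  ext i
  · simpa using hv (0, Pi.single i 1)
  · simpa using hv (Pi.single i 1, 0)

end SymplecticForm

local notation "𝔥" m:max => (Fin m → ℝ) × (Fin m → ℝ) × ℝ

section Heisenberg

variable {m : ℕ}

theorem hbr_eq_symplecticForm (v w : 𝔥 m) :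
    hbr m v w = (0, 0, -symplecticForm ℝ (Fin m) (v.1, v.2.1) (w.1, w.2.1)) := by
  simp [hbr, dotProduct, Finset.sum_sub_distrib]

abbrev SymplecticEquiv (m : ℕ) :=
  (symplecticForm ℝ (Fin m)).IsometryEquiv (symplecticForm ℝ (Fin m))

def heisenbergAut (S : SymplecticEquiv m) : (𝔥 m) ≃ₗ[ℝ] 𝔥 m :=
  (LinearEquiv.prodAssoc ℝ _ _ ℝ).symm ≪≫ₗ
    S.toLinearEquiv.prodCongr (LinearEquiv.refl ℝ ℝ) ≪≫ₗ LinearEquiv.prodAssoc ℝ _ _ ℝ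

theorem heisenbergAut_apply (S : SymplecticEquiv m) (v : 𝔥 m) :
    heisenbergAut S v = ((S (v.1, v.2.1)).1, (S (v.1, v.2.1)).2, v.2.2) := rfl

theorem hbr_heisenbergAut (S : SymplecticEquiv m) (v w : 𝔥 m) :
    hbr m (heisenbergAut S v) (heisenbergAut S w) = heisenbergAut S (hbr m v w) := by
  simp only [hbr_eq_symplecticForm, heisenbergAut_apply, Prod.mk.eta, S.map_app, Prod.mk_zero_zero,
    map_zero, Prod.fst_zero, Prod.snd_zero]

theorem hbrτ_heisenbergAut (S : SymplecticEquiv m) (τ : (𝔥 m) →ₗ[ℝ] ℝ) (v w : 𝔥 m) :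
    hbrτ m τ (heisenbergAut S v) (heisenbergAut S w)
      = heisenbergAut S (hbrτ m (τ ∘ₗ heisenbergAut S) v w) := by
  have adU_heisenbergAut (x : 𝔥 m) : adU m (heisenbergAut S x) = heisenbergAut S (adU m x) := rfl
  simp only [hbrτ, map_sub, map_add, map_smul, hbr_heisenbergAut, adU_heisenbergAut,
    LinearMap.comp_apply, LinearEquiv.coe_coe]

theorem map_center_eq_zero {τ : (𝔥 m) →ₗ[ℝ] ℝ} (hτ : ∀ v w, τ (hbr m v w) = 0) (i : Fin m) :
    τ (0, 0, 1) = 0 := by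
  have hXY : hbr m (Pi.single i 1, 0, 0) (0, Pi.single i 1, 0) = -(0, 0, 1) := by
    simp [hbr, Pi.single_apply]
  simpa only [hXY, map_neg, neg_eq_zero] using hτ (Pi.single i 1, 0, 0) (0, Pi.single i 1, 0)

theorem apply_eq_apply_of_map_center_eq_zero {τ : (𝔥 m) →ₗ[ℝ] ℝ} (hZ : τ (0, 0, 1) = 0)
    (v : 𝔥 m) : τ v = τ (v.1, v.2.1, 0) := by
  have hv : v = (v.1, v.2.1, 0) + v.2.2 • (0, 0, 1) := by ext <;> simp
  rw [hv, map_add, map_smul, hZ, smul_zero, add_zero]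
  simp

end Heisenberg

section StandardModel

variable {k : ℕ}

def heisenbergCoordX (k : ℕ) : (𝔥 (k + 1)) →ₗ[ℝ] ℝ :=
  LinearMap.proj 0 ∘ₗ LinearMap.fst ℝ _ _

@[simp]
theorem heisenbergCoordX_apply (v : 𝔥 (k + 1)) : heisenbergCoordX k v = v.1 0 := rfl

theorem exists_heisenbergAut_comp_eq {τ : (𝔥 (k + 1)) →ₗ[ℝ] ℝ} (hZ : τ (0, 0, 1) = 0)
    (hτ : τ ≠ 0) : ∃ S : SymplecticEquiv (k + 1), τ ∘ₗ heisenbergAut S = heisenbergCoordX k := by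
  let φ : Module.Dual ℝ ((Fin (k + 1) → ℝ) × (Fin (k + 1) → ℝ)) :=
    τ ∘ₗ (LinearEquiv.prodAssoc ℝ _ _ ℝ).toLinearMap ∘ₗ LinearMap.inl ℝ _ ℝ
  let ψ : Module.Dual ℝ ((Fin (k + 1) → ℝ) × (Fin (k + 1) → ℝ)) :=
    LinearMap.proj 0 ∘ₗ LinearMap.fst ℝ _ _
  have hφ : φ ≠ 0 := fun h => hτ <| LinearMap.ext fun v => by
    simpa [φ] using (apply_eq_apply_of_map_center_eq_zero hZ v).trans
      (LinearMap.congr_fun h (v.1, v.2.1))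
  have hψ : ψ ≠ 0 := fun h => by simpa [ψ] using LinearMap.congr_fun h (Pi.single 0 1, 0)
  obtain ⟨S, hS⟩ := LinearMap.BilinForm.exists_isometryEquiv_comp_eq symplecticForm_isAlt
    symplecticForm_nondegenerate hφ hψ
  refine ⟨S, LinearMap.ext fun v => ?_⟩
  rw [LinearMap.comp_apply, apply_eq_apply_of_map_center_eq_zero hZ]
  exact hS (v.1, v.2.1)

def kerCoordXEmbedding (k : ℕ) : (ℝ × 𝔥 k) →ₗ[ℝ] 𝔥 (k + 1) where
  toFun p := (Fin.cons 0 p.2.1, Fin.cons p.1 p.2.2.1, p.2.2.2)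
  map_add' p q := by
    ext i <;> try cases i using Fin.cases
    all_goals simp
  map_smul' c p := by
    ext i <;> try cases i using Fin.cases
    all_goals simp

theorem kerCoordXEmbedding_apply (p : ℝ × 𝔥 k) :
    kerCoordXEmbedding k p = (Fin.cons 0 p.2.1, Fin.cons p.1 p.2.2.1, p.2.2.2) := rfl

theorem kerCoordXEmbedding_injective : Function.Injective (kerCoordXEmbedding k) := by
  intro p q h
  simp only [kerCoordXEmbedding_apply, Prod.mk.injEq, Fin.cons_inj] at h
  ext <;> simp [h]

theorem mem_range_kerCoordXEmbedding_iff {v : 𝔥 (k + 1)} :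
    v ∈ LinearMap.range (kerCoordXEmbedding k) ↔ v.1 0 = 0 := by
  refine ⟨?_, fun hv => ⟨(v.2.1 0, Fin.tail v.1, Fin.tail v.2.1, v.2.2), ?_⟩⟩
  · rintro ⟨p, rfl⟩
    rfl
  · ext i <;> try cases i using Fin.cases
    all_goals simp [kerCoordXEmbedding_apply, hv, Fin.tail]

theorem hbr_kerCoordXEmbedding (p q : ℝ × 𝔥 k) :
    hbr (k + 1) (kerCoordXEmbedding k p) (kerCoordXEmbedding k q)
      = kerCoordXEmbedding k (rhbr (k + 1) p q) := by
  ext i <;> try cases i using Fin.cases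
  all_goals simp [kerCoordXEmbedding_apply, hbr, rhbr, Fin.sum_univ_succ]

/-- The generator `T` of the `ℝ`-factor is `X₁`, and the `ℝ`-summand of the kernel is spanned
by `Y₁ + Z`, the eigenvector of `[X₁, ·]_τ` in `span{Y₁, Z}` for the eigenvalue `1`. -/
def semidirectEquiv (k : ℕ) : (𝔥 (k + 1)) ≃ₗ[ℝ] (ℝ × 𝔥 k) × ℝ where
  toFun v := ((v.2.1 0, Fin.tail v.1, Fin.tail v.2.1, v.2.2 - v.2.1 0), v.1 0)
  invFun p := (Fin.cons p.2 p.1.2.1, Fin.cons p.1.1 p.1.2.2.1, p.1.2.2.2 + p.1.1)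
  map_add' v w := by ext <;> simp [Fin.tail, add_sub_add_comm]
  map_smul' c v := by ext <;> simp [Fin.tail, mul_sub]
  left_inv v := by
    ext i <;> try cases i using Fin.cases
    all_goals simp [Fin.tail]
  right_inv p := by ext <;> simp [Fin.tail]

theorem semidirectEquiv_hbrτ (v w : 𝔥 (k + 1)) :
    semidirectEquiv k (hbrτ (k + 1) (heisenbergCoordX k) v w)
      = sdbr (k + 1) (semidirectEquiv k v) (semidirectEquiv k w) := by
  ext <;> simp [semidirectEquiv, hbrτ, hbr, adU, sdbr, rhbr, Fin.tail, Fin.sum_univ_succ] <;> ring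

theorem exists_equiv_ker_of_comp_eq {τ : (𝔥 (k + 1)) →ₗ[ℝ] ℝ}
    {Φ : (𝔥 (k + 1)) ≃ₗ[ℝ] 𝔥 (k + 1)} (hΦ : τ ∘ₗ Φ = heisenbergCoordX k) :
    ∃ e : (ℝ × 𝔥 k) ≃ₗ[ℝ] LinearMap.ker τ, ∀ p, (e p : 𝔥 (k + 1)) = Φ (kerCoordXEmbedding k p) := by
  let g : (ℝ × 𝔥 k) →ₗ[ℝ] 𝔥 (k + 1) := Φ.toLinearMap ∘ₗ kerCoordXEmbedding k
  have hg : Function.Injective g := Φ.injective.comp kerCoordXEmbedding_injective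
  have hrange : LinearMap.range g = LinearMap.ker τ := by
    ext v
    have hτv : τ v = (Φ.symm v).1 0 := by
      rw [← heisenbergCoordX_apply, ← hΦ, LinearMap.comp_apply, LinearEquiv.coe_coe,
        LinearEquiv.apply_symm_apply]
    rw [LinearMap.range_comp, Submodule.mem_map_equiv, mem_range_kerCoordXEmbedding_iff,
      LinearMap.mem_ker, hτv]
  exact ⟨(LinearEquiv.ofInjective g hg).trans (LinearEquiv.ofEq _ _ hrange), fun _ => rfl⟩

end StandardModel

/-- if `τ : h_{2m+1} → t = span{U}` is a nonzero Lie algebra homomorphism,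
then `ker τ` is a codimension-one ideal of `h_{2m+1}` containing `Z`,
`ker τ ≅ ℝ ⊕ h_{2m-1}`, and the modification `h(τ)` is isomorphic to the semidirect
product `(ℝ ⊕ h_{2m-1}) ⋊ ℝ` with diagonal `ℝ`-action. -/
theorem stmt16 (m : ℕ) (hm : 1 ≤ m)
    (τ : ((Fin m → ℝ) × (Fin m → ℝ) × ℝ) →ₗ[ℝ] ℝ)
    (hτhom : ∀ v w, τ (hbr m v w) = 0) (hτ : τ ≠ 0) :
    τ (0, 0, 1) = 0 ∧
    Module.finrank ℝ (LinearMap.ker τ) = 2 * m ∧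
    (∀ v, ∀ w ∈ LinearMap.ker τ, hbr m v w ∈ LinearMap.ker τ) ∧
    (∃ e : (ℝ × ((Fin (m - 1) → ℝ) × (Fin (m - 1) → ℝ) × ℝ)) ≃ₗ[ℝ] LinearMap.ker τ,
      ∀ v w, (e (rhbr m v w) : (Fin m → ℝ) × (Fin m → ℝ) × ℝ)
        = hbr m (e v : (Fin m → ℝ) × (Fin m → ℝ) × ℝ)
            (e w : (Fin m → ℝ) × (Fin m → ℝ) × ℝ)) ∧
    (∃ f : ((Fin m → ℝ) × (Fin m → ℝ) × ℝ) ≃ₗ[ℝ]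
        ((ℝ × ((Fin (m - 1) → ℝ) × (Fin (m - 1) → ℝ) × ℝ)) × ℝ),
      ∀ v w, f (hbrτ m τ v w) = sdbr m (f v) (f w)) := by
  obtain ⟨k, rfl⟩ : ∃ k, m = k + 1 := ⟨m - 1, by omega⟩
  have hZ : τ (0, 0, 1) = 0 := map_center_eq_zero hτhom 0
  obtain ⟨S, hS⟩ := exists_heisenbergAut_comp_eq hZ hτ
  obtain ⟨e, he⟩ := exists_equiv_ker_of_comp_eq hS
  refine ⟨hZ, ?_, fun v w _ => hτhom v w, ⟨e, fun v w => ?_⟩,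
    ⟨(heisenbergAut S).symm ≪≫ₗ semidirectEquiv k, fun v w => ?_⟩⟩
  · rw [← e.finrank_eq]
    simp only [Module.finrank_prod, Module.finrank_self, Module.finrank_fintype_fun_eq_card,
      Fintype.card_fin]
    ring
  · rw [he, he, he, hbr_heisenbergAut, hbr_kerCoordXEmbedding]
  · obtain ⟨v, rfl⟩ := (heisenbergAut S).surjective v
    obtain ⟨w, rfl⟩ := (heisenbergAut S).surjective w
    simp only [LinearEquiv.trans_apply, hbrτ_heisenbergAut, LinearEquiv.symm_apply_apply, hS]
    exact semidirectEquiv_hbrτ v w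
end
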